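/- Let m ≥ 2, 0 ≤ s ≤ m, let I ⊆ ℝ be an open interval, and let z : I → ℝ^{m+1} be a smooth curve. Define L(x,y) = z(x)·tanh((x+y)/√2) − z'(x)/√2 on I × ℝ, and suppose that on I × ℝ, with the bilinear form of index s+1 on ℝ^{m+1}: ⟨L, L⟩_{s+1} = −1, ⟨∂L/∂x, ∂L/∂x⟩_{s+1} = 0, ⟨∂L/∂y, ∂L/∂y⟩_{s+1} = 0, and ⟨∂L/∂x, ∂L/∂y⟩_{s+1} = −sech²((x+y)/√2). Then for all x ∈ I: ⟨z(x), z(x)⟩_{s+1} = 0, ⟨z'(x), z'(x)⟩_{s+1} = −2, and ⟨z''(x), z''(x)⟩_{s+1} = 4; that is, z is a timelike curve of constant speed √2 lying in the light cone with ⟨z'', z''⟩ = 4. -/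

import Mathlib

noncomputable def pform (s n : ℕ) (u v : Fin n → ℝ) : ℝ :=
  ∑ i : Fin n, (if (i : ℕ) < s then -(u i * v i) else u i * v i)

noncomputable def pd1 {E : Type*} [NormedAddCommGroup E] [NormedSpace ℝ E]
    (L : ℝ → ℝ → E) (x y : ℝ) : E :=
  deriv (fun t => L t y) x

noncomputable def pd2 {E : Type*} [NormedAddCommGroup E] [NormedSpace ℝ E]
    (L : ℝ → ℝ → E) (x y : ℝ) : E :=
  deriv (fun t => L x t) y

noncomputable def sech (t : ℝ) : ℝ := 1 / Real.cosh t

lemma pform_eq (s n : ℕ) (u v : Fin n → ℝ) :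
    pform s n u v = ∑ i : Fin n, (if (i : ℕ) < s then (-1:ℝ) else 1) * (u i * v i) := by
  unfold pform
  refine Finset.sum_congr rfl fun i _ => ?_
  split <;> ring

lemma pform_smul_left (s n : ℕ) (a : ℝ) (u v : Fin n → ℝ) :
    pform s n (a • u) v = a * pform s n u v := by
  simp only [pform_eq, Finset.mul_sum, Pi.smul_apply, smul_eq_mul]
  exact Finset.sum_congr rfl fun i _ => by ring

lemma pform_comm (s n : ℕ) (u v : Fin n → ℝ) : pform s n u v = pform s n v u := by
  simp only [pform_eq]
  exact Finset.sum_congr rfl fun i _ => by ring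

lemma pform_smul_right (s n : ℕ) (a : ℝ) (u v : Fin n → ℝ) :
    pform s n u (a • v) = a * pform s n u v := by
  rw [pform_comm, pform_smul_left, pform_comm]

lemma pform_sub_left (s n : ℕ) (u w v : Fin n → ℝ) :
    pform s n (u - w) v = pform s n u v - pform s n w v := by
  simp only [pform_eq, ← Finset.sum_sub_distrib, Pi.sub_apply]
  exact Finset.sum_congr rfl fun i _ => by ring

lemma pform_sub_right (s n : ℕ) (u w v : Fin n → ℝ) :
    pform s n v (u - w) = pform s n v u - pform s n v w := by
  rw [pform_comm, pform_sub_left, pform_comm s n u v, pform_comm s n w v]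

lemma hasDerivAt_pform {s n : ℕ} {z w : ℝ → Fin n → ℝ} {z' w' : Fin n → ℝ} {x : ℝ}
    (hz : HasDerivAt z z' x) (hw : HasDerivAt w w' x) :
    HasDerivAt (fun t => pform s n (z t) (w t))
      (pform s n z' (w x) + pform s n (z x) w') x := by
  have h : ∀ t, pform s n (z t) (w t)
      = ∑ i : Fin n, (if (i : ℕ) < s then (-1:ℝ) else 1) * (z t i * w t i) :=
    fun t => pform_eq s n (z t) (w t)
  simp only [h]
  have key : HasDerivAt
      (fun t => ∑ i : Fin n, (if (i : ℕ) < s then (-1:ℝ) else 1) * (z t i * w t i))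
      (∑ i : Fin n, (if (i : ℕ) < s then (-1:ℝ) else 1) * (z' i * w x i + z x i * w' i)) x := by
    apply HasDerivAt.fun_sum
    intro i _
    exact (((hasDerivAt_pi.1 hz i).mul (hasDerivAt_pi.1 hw i))).const_mul _
  convert key using 1
  simp only [pform_eq, ← Finset.sum_add_distrib]
  exact Finset.sum_congr rfl fun i _ => by ring

lemma hasDerivAt_tanh (t : ℝ) :
    HasDerivAt Real.tanh (1 / Real.cosh t ^ 2) t := by
  have h := (Real.hasDerivAt_sinh t).div (Real.hasDerivAt_cosh t) (Real.cosh_pos t).ne'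
  have e : (Real.cosh t * Real.cosh t - Real.sinh t * Real.sinh t) / Real.cosh t ^ 2
      = 1 / Real.cosh t ^ 2 := by
    rw [show Real.cosh t * Real.cosh t - Real.sinh t * Real.sinh t
        = Real.cosh t ^ 2 - Real.sinh t ^ 2 by ring, Real.cosh_sq_sub_sinh_sq]
  rw [e] at h
  have : Real.tanh = fun u => Real.sinh u / Real.cosh u := by
    funext u; exact Real.tanh_eq_sinh_div_cosh u
  rw [this]
  exact h

theorem stmt_13 (m s : ℕ) (hm : 2 ≤ m) (hs : s ≤ m) (I : Set ℝ)
    (hIo : IsOpen I) (hIc : I.OrdConnected)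
    (z : ℝ → Fin (m + 1) → ℝ) (hz : ContDiffOn ℝ (⊤ : ℕ∞) z I)
    (L : ℝ → ℝ → Fin (m + 1) → ℝ)
    (hLdef : ∀ x y : ℝ,
      L x y = Real.tanh ((x + y) / Real.sqrt 2) • z x - (Real.sqrt 2)⁻¹ • deriv z x)
    (hLL : ∀ x ∈ I, ∀ y : ℝ, pform (s + 1) (m + 1) (L x y) (L x y) = -1)
    (hxx : ∀ x ∈ I, ∀ y : ℝ, pform (s + 1) (m + 1) (pd1 L x y) (pd1 L x y) = 0)
    (hyy : ∀ x ∈ I, ∀ y : ℝ, pform (s + 1) (m + 1) (pd2 L x y) (pd2 L x y) = 0)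
    (hxy : ∀ x ∈ I, ∀ y : ℝ,
      pform (s + 1) (m + 1) (pd1 L x y) (pd2 L x y) = -(sech ((x + y) / Real.sqrt 2)) ^ 2) :
    ∀ x ∈ I,
      pform (s + 1) (m + 1) (z x) (z x) = 0 ∧
      pform (s + 1) (m + 1) (deriv z x) (deriv z x) = -2 ∧
      pform (s + 1) (m + 1) (deriv (deriv z) x) (deriv (deriv z) x) = 4 := by
  have hs2 : (Real.sqrt 2) ≠ 0 := by positivity
  have hc2 : (Real.sqrt 2)⁻¹ * (Real.sqrt 2)⁻¹ = 1/2 := by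
    rw [← mul_inv, Real.mul_self_sqrt (by norm_num)]; norm_num
  -- differentiability facts
  have hzd : ∀ x ∈ I, HasDerivAt z (deriv z x) x := by
    intro x hx
    exact ((hz.differentiableOn (by simp) x hx).differentiableAt (hIo.mem_nhds hx)).hasDerivAt
  have hz'C : ContDiffOn ℝ (⊤ : ℕ∞) (deriv z) I := hz.deriv_of_isOpen hIo (by simp)
  have hzd2 : ∀ x ∈ I, HasDerivAt (deriv z) (deriv (deriv z) x) x := by
    intro x hx
    exact ((hz'C.differentiableOn (by simp) x hx).differentiableAt (hIo.mem_nhds hx)).hasDerivAt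
  -- derivative of the tanh argument
  have harg : ∀ c x : ℝ, HasDerivAt (fun t : ℝ => (c + t) / Real.sqrt 2)
      ((Real.sqrt 2)⁻¹) x := by
    intro c x
    simpa [one_div] using ((hasDerivAt_id x).const_add c).div_const (Real.sqrt 2)
  have htanh0 : ∀ c x : ℝ, c + x = 0 →
      HasDerivAt (fun t : ℝ => Real.tanh ((c + t) / Real.sqrt 2)) ((Real.sqrt 2)⁻¹) x := by
    intro c x hcx
    have h := (hasDerivAt_tanh ((c + x) / Real.sqrt 2)).comp x (harg c x)
    simpa [hcx, Real.cosh_zero, Function.comp_def] using h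
  -- pd2 at (x, -x)
  have pd2v : ∀ x : ℝ, pd2 L x (-x) = (Real.sqrt 2)⁻¹ • z x := by
    intro x
    have hfun : (fun t => L x t)
        = fun t => Real.tanh ((x + t) / Real.sqrt 2) • z x - (Real.sqrt 2)⁻¹ • deriv z x :=
      funext fun t => hLdef x t
    have hD : HasDerivAt (fun t => L x t) ((Real.sqrt 2)⁻¹ • z x) (-x) := by
      rw [hfun]
      exact ((htanh0 x (-x) (by ring)).smul_const (z x)).sub_const _
    exact hD.deriv
  -- pd1 at (x, -x), for x ∈ I
  have pd1v : ∀ x ∈ I, pd1 L x (-x)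
      = (Real.sqrt 2)⁻¹ • z x - (Real.sqrt 2)⁻¹ • deriv (deriv z) x := by
    intro x hx
    have hfun : (fun t => L t (-x))
        = fun t => Real.tanh ((t + -x) / Real.sqrt 2) • z t - (Real.sqrt 2)⁻¹ • deriv z t :=
      funext fun t => hLdef t (-x)
    have ht : HasDerivAt (fun t : ℝ => Real.tanh ((t + -x) / Real.sqrt 2))
        ((Real.sqrt 2)⁻¹) x := by
      have h := (hasDerivAt_tanh ((x + -x) / Real.sqrt 2)).comp x
        (by simpa [add_comm] using harg (-x) x :
          HasDerivAt (fun t : ℝ => (t + -x) / Real.sqrt 2) ((Real.sqrt 2)⁻¹) x)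
      simpa [Real.cosh_zero, Function.comp_def] using h
    have hD : HasDerivAt (fun t => L t (-x))
        ((Real.tanh ((x + -x) / Real.sqrt 2) • deriv z x + (Real.sqrt 2)⁻¹ • z x)
          - (Real.sqrt 2)⁻¹ • deriv (deriv z) x) x := by
      rw [hfun]
      exact (ht.smul (hzd x hx)).sub ((hzd2 x hx).const_smul ((Real.sqrt 2)⁻¹) : HasDerivAt (fun t => (Real.sqrt 2)⁻¹ • deriv z t) _ x)
    have hD' : HasDerivAt (fun t => L t (-x))
        ((Real.sqrt 2)⁻¹ • z x - (Real.sqrt 2)⁻¹ • deriv (deriv z) x) x := by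
      convert hD using 2
      simp
    exact hD'.deriv
  -- a = ⟨z,z⟩ vanishes on I
  have ha : ∀ x ∈ I, pform (s + 1) (m + 1) (z x) (z x) = 0 := by
    intro x hx
    have h := hyy x hx (-x)
    rw [pd2v x] at h
    simp only [pform_smul_left, pform_smul_right, ← mul_assoc, hc2] at h
    linarith
  -- γ = ⟨z, z''⟩ = 2
  have hγ : ∀ x ∈ I, pform (s + 1) (m + 1) (z x) (deriv (deriv z) x) = 2 := by
    intro x hx
    have h := hxy x hx (-x)
    rw [pd1v x hx, pd2v x] at h
    simp only [pform_sub_left, pform_sub_right, pform_smul_left, pform_smul_right,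
      mul_sub, ← mul_assoc, hc2] at h
    have hsech : sech ((x + -x) / Real.sqrt 2) = 1 := by
      norm_num [sech]
    rw [hsech] at h
    have hzz := ha x hx
    have hcomm := pform_comm (s + 1) (m + 1) (deriv (deriv z) x) (z x)
    linarith [h, hzz, hcomm]
  -- f = ⟨z'', z''⟩ = 4
  have hf : ∀ x ∈ I, pform (s + 1) (m + 1) (deriv (deriv z) x) (deriv (deriv z) x) = 4 := by
    intro x hx
    have h := hxx x hx (-x)
    rw [pd1v x hx] at h
    simp only [pform_sub_left, pform_sub_right, pform_smul_left, pform_smul_right,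
      mul_sub, ← mul_assoc, hc2] at h
    have hzz := ha x hx
    have hγx := hγ x hx
    have hcomm := pform_comm (s + 1) (m + 1) (deriv (deriv z) x) (z x)
    linarith [h, hzz, hγx, hcomm]
  -- b = ⟨z, z'⟩ vanishes on I (derivative of a)
  have hb : ∀ x ∈ I, pform (s + 1) (m + 1) (z x) (deriv z x) = 0 := by
    intro x hx
    have hD : HasDerivAt (fun t => pform (s + 1) (m + 1) (z t) (z t))
        (pform (s + 1) (m + 1) (deriv z x) (z x) + pform (s + 1) (m + 1) (z x) (deriv z x)) x :=
      hasDerivAt_pform (hzd x hx) (hzd x hx)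
    have hEq : (fun t => pform (s + 1) (m + 1) (z t) (z t)) =ᶠ[nhds x] fun _ => (0:ℝ) :=
      Filter.eventuallyEq_of_mem (hIo.mem_nhds hx) fun t ht => ha t ht
    have h0 : HasDerivAt (fun t => pform (s + 1) (m + 1) (z t) (z t)) 0 x :=
      (hasDerivAt_const x (0:ℝ)).congr_of_eventuallyEq hEq
    have := hD.unique h0
    have hcomm := pform_comm (s + 1) (m + 1) (deriv z x) (z x)
    linarith
  -- d = ⟨z', z'⟩ = -2 (derivative of b)
  have hd : ∀ x ∈ I, pform (s + 1) (m + 1) (deriv z x) (deriv z x) = -2 := by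
    intro x hx
    have hD : HasDerivAt (fun t => pform (s + 1) (m + 1) (z t) (deriv z t))
        (pform (s + 1) (m + 1) (deriv z x) (deriv z x)
          + pform (s + 1) (m + 1) (z x) (deriv (deriv z) x)) x :=
      hasDerivAt_pform (hzd x hx) (hzd2 x hx)
    have hEq : (fun t => pform (s + 1) (m + 1) (z t) (deriv z t)) =ᶠ[nhds x] fun _ => (0:ℝ) :=
      Filter.eventuallyEq_of_mem (hIo.mem_nhds hx) fun t ht => hb t ht
    have h0 : HasDerivAt (fun t => pform (s + 1) (m + 1) (z t) (deriv z t)) 0 x :=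
      (hasDerivAt_const x (0:ℝ)).congr_of_eventuallyEq hEq
    have := hD.unique h0
    have hγx := hγ x hx
    linarith
  intro x hx
  exact ⟨ha x hx, hd x hx, hf x hx⟩
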